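/- arXiv:2209.02905 — 6 statements merged into one kernel-verified Lean document; each statement's English description precedes it below -/
import Mathlib

section
/- Let A = {a_1,…,a_{n_1}} and B = {b_1,…,b_{n_2}} be weighted point sets in ℝ^d, and let A' = {a'_1,…,a'_{n_1}}, B' = {b'_1,…,b'_{n_2}} be point sets with the same weights satisfying ‖a_i − a'_i‖ ≤ εΔ and ‖b_j − b'_j‖ ≤ εΔ for all i, j. Then for any rigid transformation T: W²₂(A, T(B)) ≤ (1 + 2ε)·W²₂(A', T(B')) + (2ε + 4ε²)Δ². -/
open scoped BigOperators

/-- The Wasserstein distance `W²₂` between weighted point sets, with squared Euclidean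
ground cost, normalized by the smaller total weight. -/
noncomputable def wass {d n₁ n₂ : ℕ}
    (a : Fin n₁ → EuclideanSpace ℝ (Fin d)) (b : Fin n₂ → EuclideanSpace ℝ (Fin d))
    (α : Fin n₁ → ℝ) (β : Fin n₂ → ℝ) : ℝ :=
  (min (∑ i, α i) (∑ j, β j))⁻¹ *
    sInf { c : ℝ | ∃ f : Fin n₁ → Fin n₂ → ℝ,
      (∀ i j, 0 ≤ f i j) ∧ (∀ i, ∑ j, f i j ≤ α i) ∧ (∀ j, ∑ i, f i j ≤ β j) ∧
      (∑ i, ∑ j, f i j = min (∑ i, α i) (∑ j, β j)) ∧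
      c = ∑ i, ∑ j, f i j * dist (a i) (b j) ^ 2 }

/-- Wasserstein transfer inequality between a pattern pair and its
compressed (perturbed) version, under any rigid transformation `T`. -/
theorem wass_transfer
    {d n₁ n₂ : ℕ}
    (a a' : Fin n₁ → EuclideanSpace ℝ (Fin d)) (b b' : Fin n₂ → EuclideanSpace ℝ (Fin d))
    (α : Fin n₁ → ℝ) (β : Fin n₂ → ℝ) (hα : ∀ i, 0 ≤ α i) (hβ : ∀ j, 0 ≤ β j)
    (ε Δ : ℝ) (hε : 0 < ε) (hΔ : 0 < Δ)
    (ha : ∀ i, dist (a i) (a' i) ≤ ε * Δ) (hb : ∀ j, dist (b j) (b' j) ≤ ε * Δ)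
    (T : EuclideanSpace ℝ (Fin d) → EuclideanSpace ℝ (Fin d)) (hT : Isometry T) :
    wass a (fun j => T (b j)) α β ≤
      (1 + 2 * ε) * wass a' (fun j => T (b' j)) α β + (2 * ε + 4 * ε ^ 2) * Δ ^ 2 := by
  classical
  have hWA0 : 0 ≤ ∑ i, α i := Finset.sum_nonneg fun i _ => hα i
  have hWB0 : 0 ≤ ∑ j, β j := Finset.sum_nonneg fun j _ => hβ j
  set m : ℝ := min (∑ i, α i) (∑ j, β j) with hm
  have hm0 : 0 ≤ m := le_min hWA0 hWB0
  set K : ℝ := 2 * ε + 4 * ε ^ 2 with hK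
  have hK0 : 0 < K := by positivity
  -- pointwise bound
  have key : ∀ i j, dist (a i) (T (b j)) ^ 2 ≤
      (1 + 2 * ε) * dist (a' i) (T (b' j)) ^ 2 + K * Δ ^ 2 := by
    intro i j
    have hb' : dist (T (b' j)) (T (b j)) ≤ ε * Δ := by
      rw [hT.dist_eq, dist_comm]; exact hb j
    have h1 : dist (a i) (T (b j)) ≤ dist (a' i) (T (b' j)) + 2 * (ε * Δ) := by
      have h4 := dist_triangle4 (a i) (a' i) (T (b' j)) (T (b j))
      have := ha i
      linarith
    have h0 : (0:ℝ) ≤ dist (a i) (T (b j)) := dist_nonneg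
    set x := dist (a' i) (T (b' j)) with hx
    have hx0 : (0:ℝ) ≤ x := dist_nonneg
    have hsq : dist (a i) (T (b j)) ^ 2 ≤ (x + 2 * (ε * Δ)) ^ 2 := by
      apply pow_le_pow_left₀ h0 h1
    nlinarith [sq_nonneg (x - Δ), hε.le, hΔ.le, mul_nonneg hx0 hΔ.le]
  set S : Set ℝ := { c : ℝ | ∃ f : Fin n₁ → Fin n₂ → ℝ,
      (∀ i j, 0 ≤ f i j) ∧ (∀ i, ∑ j, f i j ≤ α i) ∧ (∀ j, ∑ i, f i j ≤ β j) ∧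
      (∑ i, ∑ j, f i j = m) ∧
      c = ∑ i, ∑ j, f i j * dist (a i) (T (b j)) ^ 2 } with hS
  set S' : Set ℝ := { c : ℝ | ∃ f : Fin n₁ → Fin n₂ → ℝ,
      (∀ i j, 0 ≤ f i j) ∧ (∀ i, ∑ j, f i j ≤ α i) ∧ (∀ j, ∑ i, f i j ≤ β j) ∧
      (∑ i, ∑ j, f i j = m) ∧
      c = ∑ i, ∑ j, f i j * dist (a' i) (T (b' j)) ^ 2 } with hS'
  have hwl : wass a (fun j => T (b j)) α β = m⁻¹ * sInf S := rfl
  have hwr : wass a' (fun j => T (b' j)) α β = m⁻¹ * sInf S' := rfl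
  rw [hwl, hwr]
  rcases eq_or_lt_of_le hm0 with hm0' | hmpos
  · rw [← hm0', inv_zero, zero_mul, zero_mul, mul_zero, zero_add]
    positivity
  -- m > 0 case
  set M : ℝ := max (∑ i, α i) (∑ j, β j) with hM
  have hMpos : 0 < M := lt_of_lt_of_le hmpos (min_le_max)
  -- feasible flow
  set f0 : Fin n₁ → Fin n₂ → ℝ := fun i j => α i * β j / M with hf0def
  have hf0nn : ∀ i j, 0 ≤ f0 i j := fun i j =>
    div_nonneg (mul_nonneg (hα i) (hβ j)) hMpos.le
  have hrow : ∀ i, ∑ j, f0 i j ≤ α i := by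
    intro i
    have : ∑ j, f0 i j = α i * ((∑ j, β j) / M) := by
      simp only [hf0def]
      rw [← Finset.sum_div, ← Finset.mul_sum, mul_div_assoc]
    rw [this]
    calc α i * ((∑ j, β j) / M) ≤ α i * 1 := by
          apply mul_le_mul_of_nonneg_left _ (hα i)
          rw [div_le_one hMpos]
          exact le_max_right _ _
      _ = α i := mul_one _
  have hcol : ∀ j, ∑ i, f0 i j ≤ β j := by
    intro j
    have : ∑ i, f0 i j = β j * ((∑ i, α i) / M) := by
      simp only [hf0def]
      rw [← Finset.sum_div, ← Finset.sum_mul, mul_comm, mul_div_assoc]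
    rw [this]
    calc β j * ((∑ i, α i) / M) ≤ β j * 1 := by
          apply mul_le_mul_of_nonneg_left _ (hβ j)
          rw [div_le_one hMpos]
          exact le_max_left _ _
      _ = β j := mul_one _
  have htot : ∑ i, ∑ j, f0 i j = m := by
    have h1 : ∑ i, ∑ j, f0 i j = (∑ i, α i) * (∑ j, β j) / M := by
      simp only [hf0def]
      rw [Finset.sum_mul_sum, Finset.sum_div]
      exact Finset.sum_congr rfl fun i _ => (Finset.sum_div ..).symm
    rw [h1, ← min_mul_max (∑ i, α i) (∑ j, β j), ← hm, ← hM,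
      mul_div_assoc, div_self hMpos.ne', mul_one]
  have hS'ne : S'.Nonempty :=
    ⟨_, ⟨f0, hf0nn, hrow, hcol, htot, rfl⟩⟩
  have hSbdd : BddBelow S := by
    refine ⟨0, ?_⟩
    rintro c ⟨f, hf, _, _, _, rfl⟩
    exact Finset.sum_nonneg fun i _ => Finset.sum_nonneg fun j _ =>
      mul_nonneg (hf i j) (sq_nonneg _)
  have hstep : ∀ c' ∈ S', sInf S ≤ (1 + 2 * ε) * c' + K * Δ ^ 2 * m := by
    rintro c' ⟨f, hf, hfr, hfc, hft, rfl⟩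
    have hmem : (∑ i, ∑ j, f i j * dist (a i) (T (b j)) ^ 2) ∈ S :=
      ⟨f, hf, hfr, hfc, hft, rfl⟩
    refine (csInf_le hSbdd hmem).trans ?_
    have hle : ∑ i, ∑ j, f i j * dist (a i) (T (b j)) ^ 2 ≤
        ∑ i, ∑ j, ((1 + 2 * ε) * (f i j * dist (a' i) (T (b' j)) ^ 2)
          + K * Δ ^ 2 * f i j) := by
      refine Finset.sum_le_sum fun i _ => Finset.sum_le_sum fun j _ => ?_
      have h := mul_le_mul_of_nonneg_left (key i j) (hf i j)
      nlinarith [h]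
    refine hle.trans_eq ?_
    have heq : ∑ i, ∑ j, ((1 + 2 * ε) * (f i j * dist (a' i) (T (b' j)) ^ 2)
          + K * Δ ^ 2 * f i j)
        = (1 + 2 * ε) * (∑ i, ∑ j, f i j * dist (a' i) (T (b' j)) ^ 2)
          + K * Δ ^ 2 * (∑ i, ∑ j, f i j) := by
      simp [Finset.sum_add_distrib, Finset.mul_sum]
    rw [heq, hft]
  have h1ε : (0:ℝ) < 1 + 2 * ε := by linarith
  have hfinal : sInf S ≤ (1 + 2 * ε) * sInf S' + K * Δ ^ 2 * m := by
    have hlb : ∀ c' ∈ S', (sInf S - K * Δ ^ 2 * m) / (1 + 2 * ε) ≤ c' := by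
      intro c' hc'
      rw [div_le_iff₀ h1ε]
      have := hstep c' hc'
      linarith
    have := le_csInf hS'ne hlb
    rw [div_le_iff₀ h1ε] at this
    linarith
  have hmul := mul_le_mul_of_nonneg_left hfinal (inv_nonneg.mpr hm0)
  calc m⁻¹ * sInf S ≤ m⁻¹ * ((1 + 2 * ε) * sInf S' + K * Δ ^ 2 * m) := hmul
    _ = (1 + 2 * ε) * (m⁻¹ * sInf S') + K * Δ ^ 2 * (m⁻¹ * m) := by ring
    _ = (1 + 2 * ε) * (m⁻¹ * sInf S') + K * Δ ^ 2 := by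
        rw [inv_mul_cancel₀ hmpos.ne', mul_one]
end

section
/- Let A, B, A', B' be weighted point sets in ℝ^d as above with ‖a_i − a'_i‖ ≤ εΔ and ‖b_j − b'_j‖ ≤ εΔ for all i,j. Suppose T̃ is a rigid transformation achieving a c-approximation for min_T W²₂(A', T(B')), i.e., W²₂(A', T̃(B')) ≤ c·min_T W²₂(A', T(B')). Then W²₂(A, T̃(B)) ≤ c(1+2ε)²·min_T W²₂(A, T(B)) + 2ε(c + 1 + 2cε)(1+2ε)Δ². -/
open scoped BigOperators

lemma sq_le_of_le_add_two_mul {x y ε Δ : ℝ} (hε : 0 ≤ ε) (hx : 0 ≤ x)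
    (h : x ≤ y + 2 * ε * Δ) :
    x ^ 2 ≤ (1 + 2 * ε) * y ^ 2 + (2 * ε + 4 * ε ^ 2) * Δ ^ 2 := by
  have hsq : x ^ 2 ≤ (y + 2 * ε * Δ) ^ 2 := pow_le_pow_left₀ hx h 2
  -- the cross term `4εyΔ` is absorbed by AM-GM: `2yΔ ≤ y² + Δ²`
  nlinarith [mul_nonneg hε (sq_nonneg (y - Δ))]

lemma dist_le_dist_add_of_dist_le {X : Type*} [PseudoMetricSpace X] {x x' y y' : X} {r : ℝ}
    (hx : dist x x' ≤ r) (hy : dist y y' ≤ r) : dist x y ≤ dist x' y' + 2 * r := by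
  calc dist x y ≤ dist x x' + dist x' y' + dist y' y := dist_triangle4 _ _ _ _
    _ ≤ r + dist x' y' + r := by gcongr; rwa [dist_comm]
    _ = dist x' y' + 2 * r := by ring

lemma sInf_image_le_mul_sInf_image_add {ι : Type*} {P : Set ι} {F G : ι → ℝ} {s u : ℝ}
    (hs : 0 < s) (hu : 0 ≤ u) (hF : ∀ p ∈ P, 0 ≤ F p) (h : ∀ p ∈ P, F p ≤ s * G p + u) :
    sInf (F '' P) ≤ s * sInf (G '' P) + u := by
  rcases P.eq_empty_or_nonempty with rfl | hP
  · simpa using hu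
  have hbdd : BddBelow (F '' P) := ⟨0, by rintro _ ⟨p, hp, rfl⟩; exact hF p hp⟩
  have : (sInf (F '' P) - u) / s ≤ sInf (G '' P) := by
    refine le_csInf (hP.image G) ?_
    rintro _ ⟨p, hp, rfl⟩
    rw [div_le_iff₀ hs]
    linarith [csInf_le hbdd (Set.mem_image_of_mem F hp), h p hp]
  rw [div_le_iff₀ hs] at this
  linarith

section Transport

variable {d n₁ n₂ : ℕ}

def transportPlans (α : Fin n₁ → ℝ) (β : Fin n₂ → ℝ) : Set (Fin n₁ → Fin n₂ → ℝ) :=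
  { f | (∀ i j, 0 ≤ f i j) ∧ (∀ i, ∑ j, f i j ≤ α i) ∧ (∀ j, ∑ i, f i j ≤ β j) ∧
      ∑ i, ∑ j, f i j = min (∑ i, α i) (∑ j, β j) }

noncomputable def transportCost (a : Fin n₁ → EuclideanSpace ℝ (Fin d))
    (b : Fin n₂ → EuclideanSpace ℝ (Fin d)) (f : Fin n₁ → Fin n₂ → ℝ) : ℝ :=
  ∑ i, ∑ j, f i j * dist (a i) (b j) ^ 2

variable (a a' : Fin n₁ → EuclideanSpace ℝ (Fin d)) (b b' : Fin n₂ → EuclideanSpace ℝ (Fin d))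
  (α : Fin n₁ → ℝ) (β : Fin n₂ → ℝ)

lemma wass_eq_inv_mul_sInf :
    wass a b α β = (min (∑ i, α i) (∑ j, β j))⁻¹ *
      sInf (transportCost a b '' transportPlans α β) := by
  rw [wass]
  congr 2
  ext x
  simp only [transportPlans, transportCost, Set.mem_ofPred_eq, Set.mem_image]
  constructor
  · rintro ⟨f, h₁, h₂, h₃, h₄, rfl⟩
    exact ⟨f, ⟨h₁, h₂, h₃, h₄⟩, rfl⟩
  · rintro ⟨f, ⟨h₁, h₂, h₃, h₄⟩, rfl⟩
    exact ⟨f, h₁, h₂, h₃, h₄, rfl⟩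

lemma transportCost_nonneg {f : Fin n₁ → Fin n₂ → ℝ} (hf : ∀ i j, 0 ≤ f i j) :
    0 ≤ transportCost a b f :=
  Finset.sum_nonneg fun i _ => Finset.sum_nonneg fun j _ => mul_nonneg (hf i j) (sq_nonneg _)

lemma transportCost_le_mul_add {s t : ℝ} {f : Fin n₁ → Fin n₂ → ℝ} (hf : ∀ i j, 0 ≤ f i j)
    (h : ∀ i j, dist (a i) (b j) ^ 2 ≤ s * dist (a' i) (b' j) ^ 2 + t) :
    transportCost a b f ≤ s * transportCost a' b' f + t * ∑ i, ∑ j, f i j := by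
  simp only [transportCost, Finset.mul_sum, ← Finset.sum_add_distrib]
  gcongr with i _ j _
  calc f i j * dist (a i) (b j) ^ 2 ≤ f i j * (s * dist (a' i) (b' j) ^ 2 + t) :=
        mul_le_mul_of_nonneg_left (h i j) (hf i j)
    _ = s * (f i j * dist (a' i) (b' j) ^ 2) + t * f i j := by ring

lemma wass_eq_zero_of_min_nonpos (hW : min (∑ i, α i) (∑ j, β j) ≤ 0) : wass a b α β = 0 := by
  rw [wass_eq_inv_mul_sInf]
  rcases hW.lt_or_eq with hW | hW
  · have hempty : transportPlans α β = ∅ := by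
      refine Set.eq_empty_of_forall_notMem ?_
      rintro f ⟨hf, -, -, hmass⟩
      have : 0 ≤ ∑ i, ∑ j, f i j :=
        Finset.sum_nonneg fun i _ => Finset.sum_nonneg fun j _ => hf i j
      linarith
    simp [hempty]
  · simp [hW]

theorem wass_le_mul_add {s t : ℝ} (hs : 0 < s) (ht : 0 ≤ t)
    (h : ∀ i j, dist (a i) (b j) ^ 2 ≤ s * dist (a' i) (b' j) ^ 2 + t) :
    wass a b α β ≤ s * wass a' b' α β + t := by
  set W := min (∑ i, α i) (∑ j, β j) with hW
  rcases le_or_gt W 0 with hW0 | hW0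
  · rw [wass_eq_zero_of_min_nonpos a b α β hW0, wass_eq_zero_of_min_nonpos a' b' α β hW0]
    linarith
  have key : sInf (transportCost a b '' transportPlans α β) ≤
      s * sInf (transportCost a' b' '' transportPlans α β) + t * W :=
    sInf_image_le_mul_sInf_image_add hs (by positivity)
      (fun f hf => transportCost_nonneg a b hf.1)
      fun f hf => hW ▸ hf.2.2.2 ▸ transportCost_le_mul_add a a' b b' hf.1 h
  rw [wass_eq_inv_mul_sInf, wass_eq_inv_mul_sInf, ← hW]
  calc W⁻¹ * sInf (transportCost a b '' transportPlans α β)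
      ≤ W⁻¹ * (s * sInf (transportCost a' b' '' transportPlans α β) + t * W) := by gcongr
    _ = s * (W⁻¹ * sInf (transportCost a' b' '' transportPlans α β)) + t := by
        field_simp

theorem wass_le_of_dist_le {ε Δ : ℝ} (hε : 0 ≤ ε)
    (ha : ∀ i, dist (a i) (a' i) ≤ ε * Δ) (hb : ∀ j, dist (b j) (b' j) ≤ ε * Δ) :
    wass a b α β ≤ (1 + 2 * ε) * wass a' b' α β + (2 * ε + 4 * ε ^ 2) * Δ ^ 2 :=
  wass_le_mul_add a a' b b' α β (by linarith) (by positivity) fun i j =>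
    sq_le_of_le_add_two_mul hε dist_nonneg <| by
      simpa [mul_assoc] using dist_le_dist_add_of_dist_le (ha i) (hb j)

end Transport

theorem wass_alignment_compression_general
    {d n₁ n₂ : ℕ}
    (a a' : Fin n₁ → EuclideanSpace ℝ (Fin d)) (b b' : Fin n₂ → EuclideanSpace ℝ (Fin d))
    (α : Fin n₁ → ℝ) (β : Fin n₂ → ℝ)
    (ε Δ : ℝ) (hε : 0 < ε)
    (ha : ∀ i, dist (a i) (a' i) ≤ ε * Δ) (hb : ∀ j, dist (b j) (b' j) ≤ ε * Δ)
    (c : ℝ) (hc : 1 ≤ c)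
    (Tt : EuclideanSpace ℝ (Fin d) → EuclideanSpace ℝ (Fin d)) (hTt : Isometry Tt)
    (happrox : ∀ T : EuclideanSpace ℝ (Fin d) → EuclideanSpace ℝ (Fin d), Isometry T →
      wass a' (fun j => Tt (b' j)) α β ≤ c * wass a' (fun j => T (b' j)) α β) :
    ∀ T : EuclideanSpace ℝ (Fin d) → EuclideanSpace ℝ (Fin d), Isometry T →
      wass a (fun j => Tt (b j)) α β ≤
        c * (1 + 2 * ε) ^ 2 * wass a (fun j => T (b j)) α β
          + 2 * ε * (c + 1 + 2 * c * ε) * (1 + 2 * ε) * Δ ^ 2 := by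
  intro T hT
  have to_compressed := wass_le_of_dist_le a a' (fun j => Tt (b j)) (fun j => Tt (b' j)) α β
    hε.le ha fun j => (hTt.dist_eq _ _).trans_le (hb j)
  have from_compressed := wass_le_of_dist_le a' a (fun j => T (b' j)) (fun j => T (b j)) α β
    hε.le (fun i => (dist_comm _ _).trans_le (ha i))
    fun j => (hT.dist_eq _ _).trans_le ((dist_comm _ _).trans_le (hb j))
  calc wass a (fun j => Tt (b j)) α β
      ≤ (1 + 2 * ε) * wass a' (fun j => Tt (b' j)) α β + (2 * ε + 4 * ε ^ 2) * Δ ^ 2 :=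
        to_compressed
    _ ≤ (1 + 2 * ε) * (c * ((1 + 2 * ε) * wass a (fun j => T (b j)) α β
          + (2 * ε + 4 * ε ^ 2) * Δ ^ 2)) + (2 * ε + 4 * ε ^ 2) * Δ ^ 2 := by
        have := (happrox T hT).trans
          (mul_le_mul_of_nonneg_left from_compressed (by linarith))
        gcongr
    _ = c * (1 + 2 * ε) ^ 2 * wass a (fun j => T (b j)) α β
          + 2 * ε * (c + 1 + 2 * c * ε) * (1 + 2 * ε) * Δ ^ 2 := by ring

/-- A `c`-approximate alignment of the compressed patterns `(A', B')`
is a `c(1+2ε)²`-approximate alignment (with additive error `2ε(c+1+2cε)(1+2ε)Δ²`)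
of the original patterns `(A, B)`. Rigid transformations are isometries of `ℝ^d`,
and `≤ c·min_T` is expressed by quantifying over all rigid transformations `T`. -/
theorem wass_alignment_compression
    {d n₁ n₂ : ℕ}
    (a a' : Fin n₁ → EuclideanSpace ℝ (Fin d)) (b b' : Fin n₂ → EuclideanSpace ℝ (Fin d))
    (α : Fin n₁ → ℝ) (β : Fin n₂ → ℝ) (hα : ∀ i, 0 ≤ α i) (hβ : ∀ j, 0 ≤ β j)
    (ε Δ : ℝ) (hε : 0 < ε) (hΔ : 0 < Δ)
    (ha : ∀ i, dist (a i) (a' i) ≤ ε * Δ) (hb : ∀ j, dist (b j) (b' j) ≤ ε * Δ)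
    (c : ℝ) (hc : 1 ≤ c)
    (Tt : EuclideanSpace ℝ (Fin d) → EuclideanSpace ℝ (Fin d)) (hTt : Isometry Tt)
    (happrox : ∀ T : EuclideanSpace ℝ (Fin d) → EuclideanSpace ℝ (Fin d), Isometry T →
      wass a' (fun j => Tt (b' j)) α β ≤ c * wass a' (fun j => T (b' j)) α β) :
    ∀ T : EuclideanSpace ℝ (Fin d) → EuclideanSpace ℝ (Fin d), Isometry T →
      wass a (fun j => Tt (b j)) α β ≤
        c * (1 + 2 * ε) ^ 2 * wass a (fun j => T (b j)) α β
          + 2 * ε * (c + 1 + 2 * c * ε) * (1 + 2 * ε) * Δ ^ 2 :=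
  wass_alignment_compression_general a a' b b' α β ε Δ hε ha hb c hc Tt hTt happrox
end

section
/- Let A, B, A', B' be weighted point sets in ℝ^d with ‖a_i − a'_i‖ ≤ εΔ, ‖b_j − b'_j‖ ≤ εΔ, and let λ ∈ [0,1]. If T̃ is a rigid transformation with W²₂(A', T̃(B'), λ) ≤ c·min_T W²₂(A', T(B'), λ), then W²₂(A, T̃(B), λ) ≤ c(1+2ε)²·min_T W²₂(A, T(B), λ) + 2ε(c + 1 + 2cε)(1+2ε)Δ². -/
open scoped BigOperators

/-- The fractional Wasserstein distance `W²₂(A, B, λ)`: the total transported flow is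
`λ · min{W_A, W_B}` and the cost is normalized by `λ · min{W_A, W_B}`. -/
noncomputable def fwass {d n₁ n₂ : ℕ}
    (a : Fin n₁ → EuclideanSpace ℝ (Fin d)) (b : Fin n₂ → EuclideanSpace ℝ (Fin d))
    (α : Fin n₁ → ℝ) (β : Fin n₂ → ℝ) (lam : ℝ) : ℝ :=
  (lam * min (∑ i, α i) (∑ j, β j))⁻¹ *
    sInf { c : ℝ | ∃ f : Fin n₁ → Fin n₂ → ℝ,
      (∀ i j, 0 ≤ f i j) ∧ (∀ i, ∑ j, f i j ≤ α i) ∧ (∀ j, ∑ i, f i j ≤ β j) ∧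
      (∑ i, ∑ j, f i j = lam * min (∑ i, α i) (∑ j, β j)) ∧
      c = ∑ i, ∑ j, f i j * dist (a i) (b j) ^ 2 }

/-- Transfer lemma: a uniform pointwise squared-distance bound between two placements
yields the corresponding bound on fractional Wasserstein distances. -/
lemma fwass_transfer_s9 {d n₁ n₂ : ℕ}
    (x x' : Fin n₁ → EuclideanSpace ℝ (Fin d)) (y y' : Fin n₂ → EuclideanSpace ℝ (Fin d))
    (α : Fin n₁ → ℝ) (β : Fin n₂ → ℝ) (hα : ∀ i, 0 ≤ α i) (hβ : ∀ j, 0 ≤ β j)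
    (lam : ℝ) (hlam0 : 0 ≤ lam) (hlam1 : lam ≤ 1)
    (K L : ℝ) (hK : 0 < K) (hL : 0 ≤ L)
    (hpt : ∀ i j, dist (x i) (y j) ^ 2 ≤ K * dist (x' i) (y' j) ^ 2 + L) :
    fwass x y α β lam ≤ K * fwass x' y' α β lam + L := by
  unfold fwass
  set Sa := ∑ i, α i with hSadef
  set Sb := ∑ j, β j with hSbdef
  have hSa : 0 ≤ Sa := Finset.sum_nonneg fun i _ => hα i
  have hSb : 0 ≤ Sb := Finset.sum_nonneg fun j _ => hβ j
  set M := lam * min Sa Sb with hMdef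
  have hM0 : 0 ≤ M := mul_nonneg hlam0 (le_min hSa hSb)
  rcases eq_or_lt_of_le hM0 with h0 | hMpos
  · rw [← h0]
    simp [hL]
  · -- positive mass
    have hlam : 0 < lam := by
      rcases lt_or_eq_of_le hlam0 with h | h
      · exact h
      · exfalso; rw [hMdef, ← h, zero_mul] at hMpos; exact lt_irrefl 0 hMpos
    have hmin : 0 < min Sa Sb := by
      by_contra h
      push_neg at h
      have : M ≤ 0 := mul_nonpos_of_nonneg_of_nonpos hlam0 h
      linarith
    have hSap : 0 < Sa := lt_of_lt_of_le hmin (min_le_left _ _)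
    have hSbp : 0 < Sb := lt_of_lt_of_le hmin (min_le_right _ _)
    have hmx : 0 < max Sa Sb := lt_of_lt_of_le hSap (le_max_left _ _)
    -- the sets of costs
    set S : Set ℝ := { c : ℝ | ∃ f : Fin n₁ → Fin n₂ → ℝ,
      (∀ i j, 0 ≤ f i j) ∧ (∀ i, ∑ j, f i j ≤ α i) ∧ (∀ j, ∑ i, f i j ≤ β j) ∧
      (∑ i, ∑ j, f i j = M) ∧
      c = ∑ i, ∑ j, f i j * dist (x i) (y j) ^ 2 } with hSdef
    set S' : Set ℝ := { c : ℝ | ∃ f : Fin n₁ → Fin n₂ → ℝ,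
      (∀ i j, 0 ≤ f i j) ∧ (∀ i, ∑ j, f i j ≤ α i) ∧ (∀ j, ∑ i, f i j ≤ β j) ∧
      (∑ i, ∑ j, f i j = M) ∧
      c = ∑ i, ∑ j, f i j * dist (x' i) (y' j) ^ 2 } with hS'def
    -- a canonical feasible flow
    have hflow : ∃ f : Fin n₁ → Fin n₂ → ℝ,
        (∀ i j, 0 ≤ f i j) ∧ (∀ i, ∑ j, f i j ≤ α i) ∧ (∀ j, ∑ i, f i j ≤ β j) ∧
        (∑ i, ∑ j, f i j = M) := by
      refine ⟨fun i j => lam * (α i * β j) / max Sa Sb, ?_, ?_, ?_, ?_⟩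
      · intro i j
        exact div_nonneg (mul_nonneg hlam0 (mul_nonneg (hα i) (hβ j))) hmx.le
      · intro i
        have : ∑ j, lam * (α i * β j) / max Sa Sb = lam * α i * Sb / max Sa Sb := by
          rw [← Finset.sum_div]
          congr 1
          rw [hSbdef, Finset.mul_sum]
          exact Finset.sum_congr rfl fun j _ => by ring
        rw [this, div_le_iff₀ hmx]
        have h1 : Sb ≤ max Sa Sb := le_max_right _ _
        nlinarith [hα i, hSb, mul_nonneg (mul_nonneg (sub_nonneg.mpr hlam1) (hα i)) hSb,
          mul_nonneg (hα i) (sub_nonneg.mpr h1)]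
      · intro j
        have : ∑ i, lam * (α i * β j) / max Sa Sb = lam * β j * Sa / max Sa Sb := by
          rw [← Finset.sum_div]
          congr 1
          rw [hSadef, Finset.mul_sum]
          exact Finset.sum_congr rfl fun i _ => by ring
        rw [this, div_le_iff₀ hmx]
        have h1 : Sa ≤ max Sa Sb := le_max_left _ _
        nlinarith [hβ j, hSa, mul_nonneg (mul_nonneg (sub_nonneg.mpr hlam1) (hβ j)) hSa,
          mul_nonneg (hβ j) (sub_nonneg.mpr h1)]
      · have step1 : ∀ i, ∑ j, lam * (α i * β j) / max Sa Sb
            = lam * α i * Sb / max Sa Sb := by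
          intro i
          rw [← Finset.sum_div]
          congr 1
          rw [hSbdef, Finset.mul_sum]
          exact Finset.sum_congr rfl fun j _ => by ring
        have step2 : ∑ i, ∑ j, lam * (α i * β j) / max Sa Sb
            = lam * (Sa * Sb) / max Sa Sb := by
          rw [Finset.sum_congr rfl fun i _ => step1 i, ← Finset.sum_div]
          congr 1
          rw [hSadef, mul_comm Sa Sb, ← mul_assoc, Finset.mul_sum]
          exact Finset.sum_congr rfl fun i _ => by ring
        rw [step2, hMdef, div_eq_iff hmx.ne', mul_assoc lam (Sa ⊓ Sb) (Sa ⊔ Sb),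
          min_mul_max]
    obtain ⟨g, hg0, hg1, hg2, hg3⟩ := hflow
    have hS'ne : S'.Nonempty :=
      ⟨∑ i, ∑ j, g i j * dist (x' i) (y' j) ^ 2, g, hg0, hg1, hg2, hg3, rfl⟩
    have hSbdd : BddBelow S := by
      refine ⟨0, fun cc hcc => ?_⟩
      obtain ⟨f, hf0, _, _, _, hfc⟩ := hcc
      rw [hfc]
      apply Finset.sum_nonneg; intro i _
      apply Finset.sum_nonneg; intro j _
      exact mul_nonneg (hf0 i j) (sq_nonneg _)
    -- key comparison
    have key : ∀ c' ∈ S', sInf S ≤ K * c' + L * M := by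
      intro c' hc'
      obtain ⟨f, hf0, hf1, hf2, hf3, hfc⟩ := hc'
      have hmem : (∑ i, ∑ j, f i j * dist (x i) (y j) ^ 2) ∈ S :=
        ⟨f, hf0, hf1, hf2, hf3, rfl⟩
      have hle : (∑ i, ∑ j, f i j * dist (x i) (y j) ^ 2) ≤ K * c' + L * M := by
        rw [hfc, ← hf3]
        have step : ∀ i ∈ Finset.univ, ∑ j, f i j * dist (x i) (y j) ^ 2 ≤
            ∑ j, (K * (f i j * dist (x' i) (y' j) ^ 2) + L * f i j) := by
          intro i _
          apply Finset.sum_le_sum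
          intro j _
          nlinarith [hpt i j, hf0 i j]
        calc ∑ i, ∑ j, f i j * dist (x i) (y j) ^ 2
            ≤ ∑ i, ∑ j, (K * (f i j * dist (x' i) (y' j) ^ 2) + L * f i j) :=
              Finset.sum_le_sum step
          _ = K * (∑ i, ∑ j, f i j * dist (x' i) (y' j) ^ 2) + L * (∑ i, ∑ j, f i j) := by
              rw [Finset.mul_sum, Finset.mul_sum, ← Finset.sum_add_distrib]
              congr 1; ext i
              rw [Finset.mul_sum, Finset.mul_sum, ← Finset.sum_add_distrib]
      exact le_trans (csInf_le hSbdd hmem) hle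
    have hmain : sInf S ≤ K * sInf S' + L * M := by
      have h1 : (sInf S - L * M) / K ≤ sInf S' := by
        apply le_csInf hS'ne
        intro c' hc'
        rw [div_le_iff₀ hK]
        have := key c' hc'
        nlinarith
      rw [div_le_iff₀ hK] at h1
      nlinarith
    -- conclude
    have hMinv : 0 ≤ M⁻¹ := inv_nonneg.mpr hM0
    calc M⁻¹ * sInf S ≤ M⁻¹ * (K * sInf S' + L * M) :=
          mul_le_mul_of_nonneg_left hmain hMinv
      _ = K * (M⁻¹ * sInf S') + L := by
          field_simp

/-- A `c`-approximate robust (fractional Wasserstein) alignment of the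
compressed patterns is a `c(1+2ε)²`-approximate alignment (with additive error
`2ε(c+1+2cε)(1+2ε)Δ²`) of the original patterns. -/
theorem fwass_alignment_compression
    {d n₁ n₂ : ℕ}
    (a a' : Fin n₁ → EuclideanSpace ℝ (Fin d)) (b b' : Fin n₂ → EuclideanSpace ℝ (Fin d))
    (α : Fin n₁ → ℝ) (β : Fin n₂ → ℝ) (hα : ∀ i, 0 ≤ α i) (hβ : ∀ j, 0 ≤ β j)
    (ε Δ : ℝ) (hε : 0 < ε) (hΔ : 0 < Δ)
    (ha : ∀ i, dist (a i) (a' i) ≤ ε * Δ) (hb : ∀ j, dist (b j) (b' j) ≤ ε * Δ)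
    (lam : ℝ) (hlam0 : 0 ≤ lam) (hlam1 : lam ≤ 1)
    (c : ℝ) (hc : 1 ≤ c)
    (Tt : EuclideanSpace ℝ (Fin d) → EuclideanSpace ℝ (Fin d)) (hTt : Isometry Tt)
    (happrox : ∀ T : EuclideanSpace ℝ (Fin d) → EuclideanSpace ℝ (Fin d), Isometry T →
      fwass a' (fun j => Tt (b' j)) α β lam ≤ c * fwass a' (fun j => T (b' j)) α β lam) :
    ∀ T : EuclideanSpace ℝ (Fin d) → EuclideanSpace ℝ (Fin d), Isometry T →
      fwass a (fun j => Tt (b j)) α β lam ≤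
        c * (1 + 2 * ε) ^ 2 * fwass a (fun j => T (b j)) α β lam
          + 2 * ε * (c + 1 + 2 * c * ε) * (1 + 2 * ε) * Δ ^ 2 := by
  intro T hT
  set K := 1 + 2 * ε with hKdef
  set L := 2 * ε * (1 + 2 * ε) * Δ ^ 2 with hLdef
  have hK : 0 < K := by positivity
  have hL : 0 ≤ L := by positivity
  -- pointwise squared bound helper
  have sqbound : ∀ u v : ℝ, 0 ≤ u → 0 ≤ v → u ≤ v + 2 * (ε * Δ) →
      u ^ 2 ≤ K * v ^ 2 + L := by
    intro u v hu hv huv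
    rw [hKdef, hLdef]
    nlinarith [sq_nonneg (v - Δ), sq_nonneg u, mul_nonneg hv hΔ.le]
  -- transfer from primed to unprimed (for Tt)
  have h1 : fwass a (fun j => Tt (b j)) α β lam ≤
      K * fwass a' (fun j => Tt (b' j)) α β lam + L := by
    apply fwass_transfer_s9 _ _ _ _ _ _ hα hβ _ hlam0 hlam1 _ _ hK hL
    intro i j
    apply sqbound _ _ dist_nonneg dist_nonneg
    calc dist (a i) (Tt (b j)) ≤ dist (a i) (a' i) + dist (a' i) (Tt (b' j)) +
          dist (Tt (b' j)) (Tt (b j)) := dist_triangle4 _ _ _ _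
      _ = dist (a i) (a' i) + dist (a' i) (Tt (b' j)) + dist (b' j) (b j) := by
          rw [hTt.dist_eq]
      _ ≤ ε * Δ + dist (a' i) (Tt (b' j)) + ε * Δ := by
          have := ha i
          have := hb j
          rw [dist_comm (b' j) (b j)]
          linarith [hb j]
      _ = dist (a' i) (Tt (b' j)) + 2 * (ε * Δ) := by ring
  -- transfer from unprimed to primed (for T)
  have h3 : fwass a' (fun j => T (b' j)) α β lam ≤
      K * fwass a (fun j => T (b j)) α β lam + L := by
    apply fwass_transfer_s9 _ _ _ _ _ _ hα hβ _ hlam0 hlam1 _ _ hK hL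
    intro i j
    apply sqbound _ _ dist_nonneg dist_nonneg
    calc dist (a' i) (T (b' j)) ≤ dist (a' i) (a i) + dist (a i) (T (b j)) +
          dist (T (b j)) (T (b' j)) := dist_triangle4 _ _ _ _
      _ = dist (a' i) (a i) + dist (a i) (T (b j)) + dist (b j) (b' j) := by
          rw [hT.dist_eq]
      _ ≤ ε * Δ + dist (a i) (T (b j)) + ε * Δ := by
          rw [dist_comm (a' i) (a i)]
          linarith [ha i, hb j]
      _ = dist (a i) (T (b j)) + 2 * (ε * Δ) := by ring
  have h2 := happrox T hT
  have hc0 : (0 : ℝ) ≤ c := le_trans zero_le_one hc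
  have e2 := mul_le_mul_of_nonneg_left h2 hK.le
  have e3 : K * (c * fwass a' (fun j => T (b' j)) α β lam) ≤
      K * (c * (K * fwass a (fun j => T (b j)) α β lam + L)) :=
    mul_le_mul_of_nonneg_left (mul_le_mul_of_nonneg_left h3 hc0) hK.le
  have chain : fwass a (fun j => Tt (b j)) α β lam ≤
      K * (c * (K * fwass a (fun j => T (b j)) α β lam + L)) + L := by linarith
  refine le_trans chain (le_of_eq ?_)
  rw [hKdef, hLdef]
  ring
end

section
/- Let f'_{ij} (1 ≤ i ≤ n_1, 1 ≤ j ≤ n_2) be a feasible fractional flow: f'_{ij} ≥ 0, Σ_j f'_{ij} ≤ α_i, Σ_i f'_{ij} ≤ β_j, and Σ_{ij} f'_{ij} = λ·min{W_A, W_B} where W_A = Σ_i α_i, W_B = Σ_j β_j, λ ∈ [0,1). Define w_0 = (1−λ)min{W_A,W_B}, f'_{00} = 0, f'_{0j} = w_0(β_j − Σ_i f'_{ij})/(W_B − λ min{W_A,W_B}), and f'_{i0} = w_0(α_i − Σ_j f'_{ij})/(W_A − λ min{W_A,W_B}). Then the augmented flow is feasible for the transportation problem on (A ∪ {a_0}, B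 ∪ {b_0}) with supplies α_i (and w_0 for a_0), demands β_j (and w_0 for b_0): all flows are nonnegative, all supply/demand constraints hold, and the total flow equals min{W_A,W_B} + w_0. -/
open scoped BigOperators

/-- The augmentation of a fractional flow `f` on `A × B` to the dummy-augmented bipartite
graph, sending the unused supplies and demands to the dummy points proportionally. -/
noncomputable def augFlow {n₁ n₂ : ℕ} (α : Fin n₁ → ℝ) (β : Fin n₂ → ℝ) (lam : ℝ)
    (f : Fin n₁ → Fin n₂ → ℝ) : Option (Fin n₁) → Option (Fin n₂) → ℝ
  | none, none => 0
  | none, some j =>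
      ((1 - lam) * min (∑ i', α i') (∑ j', β j')) * (β j - ∑ i', f i' j) /
        ((∑ j', β j') - lam * min (∑ i', α i') (∑ j', β j'))
  | some i, none =>
      ((1 - lam) * min (∑ i', α i') (∑ j', β j')) * (α i - ∑ j', f i j') /
        ((∑ i', α i') - lam * min (∑ i', α i') (∑ j', β j'))
  | some i, some j => f i j

/-- Any feasible fractional flow, augmented by the explicit dummy flows,
is a feasible flow for the dummy-augmented transportation problem: nonnegative,
satisfying all supply/demand constraints, with total flow `min{W_A,W_B} + w₀`. -/
theorem augFlow_feasible
    {n₁ n₂ : ℕ}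
    (α : Fin n₁ → ℝ) (β : Fin n₂ → ℝ) (hα : ∀ i, 0 ≤ α i) (hβ : ∀ j, 0 ≤ β j)
    (hWA : 0 < ∑ i, α i) (hWB : 0 < ∑ j, β j)
    (lam : ℝ) (hlam0 : 0 ≤ lam) (hlam1 : lam < 1)
    (w₀ : ℝ) (hw₀ : w₀ = (1 - lam) * min (∑ i, α i) (∑ j, β j))
    (f : Fin n₁ → Fin n₂ → ℝ)
    (hpos : ∀ i j, 0 ≤ f i j)
    (hrow : ∀ i, ∑ j, f i j ≤ α i)
    (hcol : ∀ j, ∑ i, f i j ≤ β j)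
    (htot : ∑ i, ∑ j, f i j = lam * min (∑ i, α i) (∑ j, β j)) :
    (∀ o₁ o₂, 0 ≤ augFlow α β lam f o₁ o₂) ∧
    (∀ o₁, ∑ o₂, augFlow α β lam f o₁ o₂ ≤ Option.elim o₁ w₀ α) ∧
    (∀ o₂, ∑ o₁, augFlow α β lam f o₁ o₂ ≤ Option.elim o₂ w₀ β) ∧
    (∑ o₁, ∑ o₂, augFlow α β lam f o₁ o₂ = min (∑ i, α i) (∑ j, β j) + w₀) := by
  set WA := ∑ i, α i with hWAdef
  set WB := ∑ j, β j with hWBdef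
  set m := min WA WB with hmdef
  have hm : 0 < m := lt_min hWA hWB
  have hmA : m ≤ WA := min_le_left _ _
  have hmB : m ≤ WB := min_le_right _ _
  have hlm : lam * m < m := by nlinarith
  have hDA : 0 < WA - lam * m := by linarith
  have hDB : 0 < WB - lam * m := by linarith
  have hw0nn : 0 ≤ (1 - lam) * m := mul_nonneg (by linarith) hm.le
  have hw0DA : (1 - lam) * m ≤ WA - lam * m := by nlinarith
  have hw0DB : (1 - lam) * m ≤ WB - lam * m := by nlinarith
  -- column-slack sum
  have hcolsum : ∑ j, (β j - ∑ i, f i j) = WB - lam * m := by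
    rw [Finset.sum_sub_distrib, ← hWBdef, Finset.sum_comm, htot]
  have hrowsum : ∑ i, (α i - ∑ j, f i j) = WA - lam * m := by
    rw [Finset.sum_sub_distrib, ← hWAdef, htot]
  -- dummy row sum equals w₀
  have hrnone : ∑ o₂ : Option (Fin n₂), augFlow α β lam f none o₂ = w₀ := by
    rw [Fintype.sum_option]
    have h0 : augFlow α β lam f none none = 0 := rfl
    have hs : ∀ j, augFlow α β lam f none (some j)
        = ((1 - lam) * m) * (β j - ∑ i, f i j) / (WB - lam * m) := fun j => rfl
    simp only [h0, hs, zero_add]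
    rw [← Finset.sum_div, ← Finset.mul_sum, hcolsum, hw₀]
    field_simp
  have hcnone : ∑ o₁ : Option (Fin n₁), augFlow α β lam f o₁ none = w₀ := by
    rw [Fintype.sum_option]
    have h0 : augFlow α β lam f none none = 0 := rfl
    have hs : ∀ i, augFlow α β lam f (some i) none
        = ((1 - lam) * m) * (α i - ∑ j, f i j) / (WA - lam * m) := fun i => rfl
    simp only [h0, hs, zero_add]
    rw [← Finset.sum_div, ← Finset.mul_sum, hrowsum, hw₀]
    field_simp
  refine ⟨?_, ?_, ?_, ?_⟩
  · rintro (_ | i) (_ | j)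
    · exact le_refl 0
    · exact div_nonneg (mul_nonneg hw0nn (sub_nonneg.2 (hcol _))) hDB.le
    · exact div_nonneg (mul_nonneg hw0nn (sub_nonneg.2 (hrow _))) hDA.le
    · exact hpos i j
  · rintro (_ | i)
    · exact le_of_eq hrnone
    · rw [Fintype.sum_option]
      have hs : augFlow α β lam f (some i) none
          = ((1 - lam) * m) * (α i - ∑ j, f i j) / (WA - lam * m) := rfl
      have hd : ((1 - lam) * m) * (α i - ∑ j, f i j) / (WA - lam * m)
          ≤ α i - ∑ j, f i j := by
        rw [div_le_iff₀ hDA]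
        nlinarith [sub_nonneg.2 (hrow i)]
      have : ∀ j, augFlow α β lam f (some i) (some j) = f i j := fun j => rfl
      simp only [hs, this, Option.elim]
      linarith
  · rintro (_ | j)
    · exact le_of_eq hcnone
    · rw [Fintype.sum_option]
      have hs : augFlow α β lam f none (some j)
          = ((1 - lam) * m) * (β j - ∑ i, f i j) / (WB - lam * m) := rfl
      have hd : ((1 - lam) * m) * (β j - ∑ i, f i j) / (WB - lam * m)
          ≤ β j - ∑ i, f i j := by
        rw [div_le_iff₀ hDB]
        nlinarith [sub_nonneg.2 (hcol j)]
      have : ∀ i, augFlow α β lam f (some i) (some j) = f i j := fun i => rfl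
      simp only [hs, this, Option.elim]
      linarith
  · rw [Fintype.sum_option, hrnone]
    have hrow_i : ∀ i, ∑ o₂ : Option (Fin n₂), augFlow α β lam f (some i) o₂
        = ((1 - lam) * m) * (α i - ∑ j, f i j) / (WA - lam * m) + ∑ j, f i j := by
      intro i
      rw [Fintype.sum_option]
      rfl
    rw [Finset.sum_congr rfl (fun i _ => hrow_i i), Finset.sum_add_distrib, htot,
      ← Finset.sum_div, ← Finset.mul_sum, hrowsum, hw₀]
    field_simp
    ring
end

section
/- Let A, B, A', B' be weighted point sets in ℝ^d (same index sets and weights for A vs A' and B vs B') with ‖a_i − a'_i‖ ≤ εΔ and ‖b_j − b'_j‖ ≤ εΔ for all i, j, and let λ ∈ (0,1]. Then for every rigid transformation T: W²₂(A, T(B), λ) ≤ (1 + 2ε)·W²₂(A', T(B'), λ) + (2ε + 4ε²)Δ². -/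
open scoped BigOperators

lemma key_bound {d : ℕ} (x x' y y' : EuclideanSpace ℝ (Fin d)) (ε Δ : ℝ)
    (hε : 0 < ε) (hΔ : 0 < Δ) (hx : dist x x' ≤ ε * Δ) (hy : dist y y' ≤ ε * Δ) :
    dist x y ^ 2 ≤ (1 + 2 * ε) * dist x' y' ^ 2 + (2 * ε + 4 * ε ^ 2) * Δ ^ 2 := by
  have h : dist x y ≤ dist x' y' + 2 * (ε * Δ) := by
    have := dist_triangle4 x x' y' y
    have hy' : dist y' y ≤ ε * Δ := by rwa [dist_comm]
    linarith
  have h0 : (0:ℝ) ≤ dist x y := dist_nonneg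
  have h1 : (0:ℝ) ≤ dist x' y' := dist_nonneg
  nlinarith [sq_nonneg (dist x' y' - Δ), sq_nonneg (dist x y)]


/-- Fractional Wasserstein transfer inequality between a pattern pair and
its perturbed version, under any rigid transformation `T`. -/
theorem fwass_transfer
    {d n₁ n₂ : ℕ}
    (a a' : Fin n₁ → EuclideanSpace ℝ (Fin d)) (b b' : Fin n₂ → EuclideanSpace ℝ (Fin d))
    (α : Fin n₁ → ℝ) (β : Fin n₂ → ℝ) (hα : ∀ i, 0 ≤ α i) (hβ : ∀ j, 0 ≤ β j)
    (ε Δ : ℝ) (hε : 0 < ε) (hΔ : 0 < Δ)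
    (ha : ∀ i, dist (a i) (a' i) ≤ ε * Δ) (hb : ∀ j, dist (b j) (b' j) ≤ ε * Δ)
    (lam : ℝ) (hlam0 : 0 < lam) (hlam1 : lam ≤ 1)
    (T : EuclideanSpace ℝ (Fin d) → EuclideanSpace ℝ (Fin d)) (hT : Isometry T) :
    fwass a (fun j => T (b j)) α β lam ≤
      (1 + 2 * ε) * fwass a' (fun j => T (b' j)) α β lam + (2 * ε + 4 * ε ^ 2) * Δ ^ 2 := by
  classical
  set Sa := ∑ i, α i with hSa
  set Sb := ∑ j, β j with hSb
  have hSa0 : 0 ≤ Sa := Finset.sum_nonneg fun i _ => hα i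
  have hSb0 : 0 ≤ Sb := Finset.sum_nonneg fun j _ => hβ j
  set W := min Sa Sb with hWdef
  have hW0 : 0 ≤ W := le_min hSa0 hSb0
  set K := (2 * ε + 4 * ε ^ 2) * Δ ^ 2 with hKdef
  have hK0 : 0 ≤ K := by positivity
  rcases eq_or_lt_of_le hW0 with hW | hW
  · -- degenerate case: W = 0
    have hM : lam * W = 0 := by rw [← hW, mul_zero]
    simp only [fwass, ← hSa, ← hSb, ← hWdef, hM, inv_zero, zero_mul]
    positivity
  · -- W > 0
    have hM : 0 < lam * W := mul_pos hlam0 hW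
    have hSap : 0 < Sa := lt_of_lt_of_le hW (min_le_left _ _)
    have hSbp : 0 < Sb := lt_of_lt_of_le hW (min_le_right _ _)
    set Mx := max Sa Sb with hMx
    have hMxp : 0 < Mx := lt_of_lt_of_le hSap (le_max_left _ _)
    set S := { c : ℝ | ∃ f : Fin n₁ → Fin n₂ → ℝ,
      (∀ i j, 0 ≤ f i j) ∧ (∀ i, ∑ j, f i j ≤ α i) ∧ (∀ j, ∑ i, f i j ≤ β j) ∧
      (∑ i, ∑ j, f i j = lam * W) ∧
      c = ∑ i, ∑ j, f i j * dist (a i) (T (b j)) ^ 2 } with hSdef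
    set S' := { c : ℝ | ∃ f : Fin n₁ → Fin n₂ → ℝ,
      (∀ i j, 0 ≤ f i j) ∧ (∀ i, ∑ j, f i j ≤ α i) ∧ (∀ j, ∑ i, f i j ≤ β j) ∧
      (∑ i, ∑ j, f i j = lam * W) ∧
      c = ∑ i, ∑ j, f i j * dist (a' i) (T (b' j)) ^ 2 } with hS'def
    -- S' is nonempty
    have hne : S'.Nonempty := by
      refine ⟨_, fun i j => (lam / Mx) * (α i * β j),
        fun i j => mul_nonneg (div_nonneg hlam0.le hMxp.le) (mul_nonneg (hα i) (hβ j)),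
        ?_, ?_, ?_, rfl⟩
      · intro i
        have hrow : ∑ j, (lam / Mx) * (α i * β j) = (lam / Mx) * (α i * Sb) := by
          rw [← Finset.mul_sum, ← Finset.mul_sum]
        rw [hrow, div_mul_eq_mul_div, div_le_iff₀ hMxp]
        have h2 : Sb ≤ Mx := le_max_right _ _
        nlinarith [mul_le_mul_of_nonneg_left h2 (hα i),
          mul_le_mul_of_nonneg_right hlam1 (mul_nonneg (hα i) hSb0)]
      · intro j
        have hcol : ∑ i, (lam / Mx) * (α i * β j) = (lam / Mx) * (Sa * β j) := by
          rw [← Finset.mul_sum, ← Finset.sum_mul]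
        rw [hcol, div_mul_eq_mul_div, div_le_iff₀ hMxp]
        have h2 : Sa ≤ Mx := le_max_left _ _
        nlinarith [mul_le_mul_of_nonneg_left h2 (hβ j),
          mul_le_mul_of_nonneg_right hlam1 (mul_nonneg hSa0 (hβ j))]
      · have htot : ∑ i, ∑ j, (lam / Mx) * (α i * β j) = (lam / Mx) * (Sa * Sb) := by
          simp only [← Finset.mul_sum]
          rw [← hSb, ← Finset.sum_mul, ← hSa]
        rw [htot]
        have hprod : W * Mx = Sa * Sb := min_mul_max Sa Sb
        rw [← hprod]
        field_simp
    -- S is bounded below by 0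
    have hSbdd : BddBelow S := by
      refine ⟨0, fun c hc => ?_⟩
      obtain ⟨f, hf0, -, -, -, rfl⟩ := hc
      exact Finset.sum_nonneg fun i _ => Finset.sum_nonneg fun j _ =>
        mul_nonneg (hf0 i j) (sq_nonneg _)
    -- key step: sInf S ≤ (1+2ε) c' + K * (lam * W) for all c' ∈ S'
    have main : ∀ c' ∈ S', sInf S ≤ (1 + 2 * ε) * c' + K * (lam * W) := by
      rintro c' ⟨f, hf0, hf1, hf2, hf3, rfl⟩
      have hmem : (∑ i, ∑ j, f i j * dist (a i) (T (b j)) ^ 2) ∈ S :=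
        ⟨f, hf0, hf1, hf2, hf3, rfl⟩
      refine (csInf_le hSbdd hmem).trans ?_
      have hbd : ∀ i j, f i j * dist (a i) (T (b j)) ^ 2 ≤
          f i j * ((1 + 2 * ε) * dist (a' i) (T (b' j)) ^ 2 + K) := by
        intro i j
        apply mul_le_mul_of_nonneg_left _ (hf0 i j)
        have hTb : dist (T (b j)) (T (b' j)) ≤ ε * Δ := by
          rw [hT.dist_eq]; exact hb j
        exact key_bound (a i) (a' i) (T (b j)) (T (b' j)) ε Δ hε hΔ (ha i) hTb
      calc ∑ i, ∑ j, f i j * dist (a i) (T (b j)) ^ 2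
          ≤ ∑ i, ∑ j, f i j * ((1 + 2 * ε) * dist (a' i) (T (b' j)) ^ 2 + K) :=
            Finset.sum_le_sum fun i _ => Finset.sum_le_sum fun j _ => hbd i j
        _ = (1 + 2 * ε) * (∑ i, ∑ j, f i j * dist (a' i) (T (b' j)) ^ 2)
              + K * (∑ i, ∑ j, f i j) := by
            simp only [Finset.mul_sum, ← Finset.sum_add_distrib]
            refine Finset.sum_congr rfl fun i _ => Finset.sum_congr rfl fun j _ => by ring
        _ = (1 + 2 * ε) * (∑ i, ∑ j, f i j * dist (a' i) (T (b' j)) ^ 2) + K * (lam * W) := by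
            rw [hf3]
    -- hence sInf S ≤ (1+2ε) sInf S' + K (lam W)
    have hstep : sInf S ≤ (1 + 2 * ε) * sInf S' + K * (lam * W) := by
      have h12 : (0:ℝ) < 1 + 2 * ε := by linarith
      have hlow : (sInf S - K * (lam * W)) / (1 + 2 * ε) ≤ sInf S' := by
        refine le_csInf hne fun c' hc' => ?_
        rw [div_le_iff₀ h12]
        have := main c' hc'
        linarith
      rw [div_le_iff₀ h12] at hlow
      nlinarith [hlow]
    -- conclude
    have hfw1 : fwass a (fun j => T (b j)) α β lam = (lam * W)⁻¹ * sInf S := rfl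
    have hfw2 : fwass a' (fun j => T (b' j)) α β lam = (lam * W)⁻¹ * sInf S' := rfl
    rw [hfw1, hfw2]
    have hMinv : 0 < (lam * W)⁻¹ := inv_pos.mpr hM
    calc (lam * W)⁻¹ * sInf S
        ≤ (lam * W)⁻¹ * ((1 + 2 * ε) * sInf S' + K * (lam * W)) :=
          mul_le_mul_of_nonneg_left hstep hMinv.le
      _ = (1 + 2 * ε) * ((lam * W)⁻¹ * sInf S') + K := by
          field_simp
  done
end

section
/- Let S ⊆ P be the set of centers produced by k iterations of Gonzalez's farthest-point algorithm on a finite metric space P: c_1 ∈ P is arbitrary, and for l ≥ 2, c_l ∈ P maximizes dist(c_l, {c_1,…,c_{l−1}}). Let r = max_{p∈P} dist(p, S) be the final covering radius. Then r ≤ min{d(c_i, c_j) : 1 ≤ i < j ≤ k}, i.e., the covering radius is at most the minimum pairwise distance among the selected centers. -/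
/-- For the centers `c 0, …, c (k−1)` produced by Gonzalez's
farthest-point algorithm on a finite point set `P` (each new center maximizes the
distance to the previously chosen centers), the final covering radius
`r = max_{p ∈ P} dist(p, S)` is at most the minimum pairwise distance among the centers. -/
theorem gonzalez_covering_radius_le_min_pairwise
    {X : Type*} [MetricSpace X] (P : Finset X) (k : ℕ) (hk : 0 < k)
    (c : Fin k → X) (hcP : ∀ l, c l ∈ P)
    (hgreedy : ∀ l : Fin k, ∀ p ∈ P,
      Metric.infDist p (c '' {m : Fin k | m < l}) ≤
        Metric.infDist (c l) (c '' {m : Fin k | m < l}))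
    (r : ℝ)
    (hrub : ∀ p ∈ P, Metric.infDist p (Set.range c) ≤ r)
    (hrmem : ∃ p ∈ P, Metric.infDist p (Set.range c) = r) :
    ∀ i j : Fin k, i ≠ j → r ≤ dist (c i) (c j) := by
  -- WLOG i < j
  have key : ∀ i j : Fin k, i < j → r ≤ dist (c i) (c j) := by
    intro i j hij
    obtain ⟨p, hpP, hpr⟩ := hrmem
    have hne : (c '' {m : Fin k | m < j}).Nonempty := ⟨c i, ⟨i, hij, rfl⟩⟩
    have hsub : (c '' {m : Fin k | m < j}) ⊆ Set.range c := by
      rintro x ⟨m, _, rfl⟩; exact ⟨m, rfl⟩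
    have h1 : r ≤ Metric.infDist p (c '' {m : Fin k | m < j}) := by
      rw [← hpr]; exact Metric.infDist_le_infDist_of_subset hsub hne
    have h2 := hgreedy j p hpP
    have h3 : Metric.infDist (c j) (c '' {m : Fin k | m < j}) ≤ dist (c j) (c i) :=
      Metric.infDist_le_dist_of_mem ⟨i, hij, rfl⟩
    rw [dist_comm]
    exact le_trans (le_trans h1 h2) h3
  intro i j hij
  rcases lt_or_gt_of_ne hij with h | h
  · exact key i j h
  · rw [dist_comm]; exact key j i h
end
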